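/- arXiv:2211.11241 — 7 statements merged into one kernel-verified Lean document; each statement's English description precedes it below -/
import Mathlib

section
/- If t = p/q ∈ (0,1) with p, q coprime positive integers, p < q, and p ∈ Γ or q ∈ Γ, then C_t contains a nondegenerate closed interval, i.e., there exist real numbers a < b with [a,b] ⊆ C_t. -/
open Filter Topology

/-- The digit set `Ω_t = {0, 3t, 3, 3t+3}`. -/
def Omega (t : ℝ) : Set ℝ := {0, 3*t, 3, 3*t+3}

/-- The projection `C_t` of the four corner Cantor set:
the set of sums `∑_{i≥1} d_i 4^{-i}` with all digits `d_i ∈ Ω_t`. -/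
noncomputable def cornerC (t : ℝ) : Set ℝ :=
  {x | ∃ d : ℕ → ℝ, (∀ i, d i ∈ Omega t) ∧ x = ∑' i : ℕ, d i / 4^(i+1)}

/-- `Γ = {(2k-1)·2^{2ℓ-1} : k, ℓ ∈ ℕ_{>0}}`. -/
def Gamma : Set ℕ := {m | ∃ k l : ℕ, 0 < k ∧ 0 < l ∧ m = (2*k-1) * 2^(2*l-1)}

/-!
For `t = p / q`, the set `(q / 3) • C_t` consists of the base-4 expansions with digits in
`{0, p} + {0, q}`. Membership in `Γ` says `p = 4 ^ e * u` (or `q = 4 ^ e * u`) with `u ≡ 2 mod 4`,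
and then the other number is odd by coprimality. Inserting `e` leading zeros in the first summand
shows that the expansions with digits `{0, u} + {0, q}` are among these, and now the digits form a
complete residue system mod 4. Hence every real `x` has an integer translate in the compact set `X`
of such expansions: the integer `⌊4 ^ k x⌋` is congruent mod `4 ^ k` to a `k`-digit expansion, and
these approximations converge. By Baire, one of the countably many closed translates `X + n`, which
cover `ℝ`, has interior.
-/

open Set Finset Bornology Pointwise

def digitExpansions (b : ℝ) (D : Set ℝ) : Set ℝ :=
  {x | ∃ d : ℕ → ℝ, (∀ i, d i ∈ D) ∧ x = ∑' i, d i / b ^ (i + 1)}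

section Series

variable {b M : ℝ} {d : ℕ → ℝ}

theorem hasSum_div_pow_succ (hb : 1 < b) (M : ℝ) :
    HasSum (fun i : ℕ => M / b ^ (i + 1)) (M / (b - 1)) := by
  have hb0 : b ≠ 0 := by linarith
  have hb1 : b - 1 ≠ 0 := by linarith
  have h := (hasSum_geometric_of_lt_one (inv_nonneg.2 (by positivity))
    (inv_lt_one_of_one_lt₀ hb)).mul_left (M / b)
  have hterm : (fun i : ℕ => M / b * b⁻¹ ^ i) = fun i => M / b ^ (i + 1) := by
    ext i
    rw [inv_pow, pow_succ]
    field_simp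
  rwa [hterm, show M / b * (1 - b⁻¹)⁻¹ = M / (b - 1) by field_simp] at h

theorem norm_div_pow_succ_le (hb : 1 < b) (hd : ∀ i, ‖d i‖ ≤ M) (i : ℕ) :
    ‖d i / b ^ (i + 1)‖ ≤ M / b ^ (i + 1) := by
  rw [norm_div, norm_pow, Real.norm_of_nonneg (by positivity : (0 : ℝ) ≤ b)]
  gcongr
  exact hd i

theorem summable_div_pow_succ (hb : 1 < b) (hd : ∀ i, ‖d i‖ ≤ M) :
    Summable fun i => d i / b ^ (i + 1) :=
  Summable.of_norm_bounded (hasSum_div_pow_succ hb M).summable (norm_div_pow_succ_le hb hd)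

theorem norm_tsum_div_pow_succ_le (hb : 1 < b) (hd : ∀ i, ‖d i‖ ≤ M) :
    ‖∑' i, d i / b ^ (i + 1)‖ ≤ M / (b - 1) :=
  tsum_of_norm_bounded (hasSum_div_pow_succ hb M) (norm_div_pow_succ_le hb hd)

theorem norm_tsum_sub_sum_div_pow_succ_le (hb : 1 < b) (hd : ∀ i, ‖d i‖ ≤ M) (k : ℕ) :
    ‖∑' i, d i / b ^ (i + 1) - ∑ i ∈ range k, d i / b ^ (i + 1)‖ ≤ M / (b - 1) / b ^ k := by
  rw [← (summable_div_pow_succ hb hd).sum_add_tsum_nat_add k, add_sub_cancel_left]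
  have htail : ∑' i, d (i + k) / b ^ (i + k + 1) = (∑' i, d (i + k) / b ^ (i + 1)) / b ^ k := by
    rw [← tsum_div_const]
    congr! 2 with i
    rw [div_div, ← pow_add, add_right_comm]
  rw [htail, norm_div, norm_pow, Real.norm_of_nonneg (by positivity : (0 : ℝ) ≤ b)]
  gcongr
  exact norm_tsum_div_pow_succ_le hb fun i => hd (i + k)

end Series

section DigitExpansions

variable {b : ℝ} {D E : Set ℝ}

theorem isCompact_digitExpansions (hb : 1 < b) (hD : IsCompact D) :
    IsCompact (digitExpansions b D) := by
  have : CompactSpace D := isCompact_iff_compactSpace.mp hD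
  obtain ⟨M, hM⟩ := hD.isBounded.exists_norm_le
  have hrange : digitExpansions b D = range fun d : ℕ → D => ∑' i, (d i : ℝ) / b ^ (i + 1) := by
    ext x
    constructor
    · rintro ⟨d, hd, rfl⟩
      exact ⟨fun i => ⟨d i, hd i⟩, rfl⟩
    · rintro ⟨d, rfl⟩
      exact ⟨fun i => d i, fun i => (d i).2, rfl⟩
  rw [hrange]
  exact isCompact_range (continuous_tsum (fun i => by fun_prop)
    (hasSum_div_pow_succ hb M).summable fun i d =>
      norm_div_pow_succ_le hb (fun i => hM _ (d i).2) i)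

theorem digitExpansions_add (hb : 1 < b) (hD : IsBounded D) (hE : IsBounded E) :
    digitExpansions b (D + E) = digitExpansions b D + digitExpansions b E := by
  obtain ⟨M, hM⟩ := hD.exists_norm_le
  obtain ⟨N, hN⟩ := hE.exists_norm_le
  apply Set.Subset.antisymm
  · rintro _ ⟨s, hs, rfl⟩
    choose d hd e he hde using hs
    dsimp only at hde
    refine ⟨_, ⟨d, hd, rfl⟩, _, ⟨e, he, rfl⟩, ?_⟩
    show (_ : ℝ) + _ = _
    rw [← (summable_div_pow_succ hb fun i => hM _ (hd i)).tsum_add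
      (summable_div_pow_succ hb fun i => hN _ (he i))]
    simp only [← add_div, hde]
  · rintro _ ⟨_, ⟨d, hd, rfl⟩, _, ⟨e, he, rfl⟩, rfl⟩
    refine ⟨d + e, fun i => add_mem_add (hd i) (he i), ?_⟩
    show (_ : ℝ) + _ = _
    rw [← (summable_div_pow_succ hb fun i => hM _ (hd i)).tsum_add
      (summable_div_pow_succ hb fun i => hN _ (he i))]
    simp only [Pi.add_apply, add_div]

theorem smul_digitExpansions_subset (c : ℝ) :
    c • digitExpansions b D ⊆ digitExpansions b (c • D) := by
  rintro _ ⟨_, ⟨d, hd, rfl⟩, rfl⟩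
  refine ⟨c • d, fun i => smul_mem_smul_set (hd i), ?_⟩
  simp only [Pi.smul_apply, smul_eq_mul, mul_div_assoc, tsum_mul_left]

theorem digitExpansions_subset_pow_smul (hb : b ≠ 0) (h0 : 0 ∈ D) (e : ℕ) :
    digitExpansions b D ⊆ digitExpansions b (b ^ e • D) := by
  rintro _ ⟨d, hd, rfl⟩
  set d' : ℕ → ℝ := fun i => if e ≤ i then b ^ e • d (i - e) else 0
  refine ⟨d', fun i => ?_, ?_⟩
  · by_cases hi : e ≤ i
    · simp only [d', hi, if_true]
      exact smul_mem_smul_set (hd (i - e))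
    · simp only [d', hi, if_false]
      rw [← smul_zero (b ^ e)]
      exact smul_mem_smul_set h0
  · have hshift : (fun n => d' (n + e) / b ^ (n + e + 1)) = fun n => d n / b ^ (n + 1) := by
      ext n
      simp only [d', le_add_self, if_true, Nat.add_sub_cancel, add_right_comm n e, pow_add,
        smul_eq_mul]
      field_simp
    have hprefix : ∑ i ∈ range e, d' i / b ^ (i + 1) = 0 :=
      sum_eq_zero fun i hi => by simp [d', not_le.2 (mem_range.1 hi)]
    refine tsum_eq_tsum_of_hasSum_iff_hasSum fun {a} => ?_
    rw [← hshift]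
    simpa only [hprefix, sub_zero] using
      hasSum_nat_add_iff' (f := fun i => d' i / b ^ (i + 1)) e (g := a)

end DigitExpansions

section CompleteResidueSystem

variable {b : ℕ} {D : Set ℝ}

theorem exists_digits_div_pow_eq_int_add_sum (hb : b ≠ 0)
    (hres : ∀ n : ℤ, ∃ m : ℤ, (n + b * m : ℝ) ∈ D) (k : ℕ) (N : ℤ) :
    ∃ d : ℕ → ℝ, (∀ i, d i ∈ D) ∧
      ∃ m : ℤ, (N : ℝ) / b ^ k = m + ∑ i ∈ range k, d i / b ^ (i + 1) := by
  induction k generalizing N with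
  | zero =>
    obtain ⟨m, hm⟩ := hres 0
    exact ⟨fun _ => _, fun _ => hm, N, by simp⟩
  | succ k ih =>
    obtain ⟨m, hm⟩ := hres N
    obtain ⟨d, hd, m', hm'⟩ := ih (-m)
    refine ⟨Function.update d k (N + b * m), fun i => ?_, m', ?_⟩
    · rcases eq_or_ne i k with rfl | hi
      · simpa using hm
      · simpa [hi] using hd i
    · have hb' : (b : ℝ) ≠ 0 := Nat.cast_ne_zero.2 hb
      rw [sum_range_succ, Function.update_self, ← add_assoc,
        sum_congr rfl fun i hi => by rw [Function.update_of_ne (mem_range.1 hi).ne], ← hm']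
      push_cast
      field_simp
      ring

theorem exists_int_sub_mem_digitExpansions (hb : 1 < b) (hD : IsCompact D)
    (hres : ∀ n : ℤ, ∃ m : ℤ, (n + b * m : ℝ) ∈ D) (x : ℝ) :
    ∃ n : ℤ, x - n ∈ digitExpansions b D := by
  have hb' : (1 : ℝ) < b := Nat.one_lt_cast.2 hb
  obtain ⟨M, hM⟩ := hD.isBounded.exists_norm_le
  have hclosed : IsClosed (digitExpansions b D + range ((↑) : ℤ → ℝ)) :=
    Real.isClosed_range_intCast.add_left_of_isCompact (isCompact_digitExpansions hb' hD)
  suffices x ∈ digitExpansions b D + range ((↑) : ℤ → ℝ) by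
    obtain ⟨y, hy, _, ⟨n, rfl⟩, rfl⟩ := this
    exact ⟨n, by simpa using hy⟩
  rw [← hclosed.closure_eq]
  choose d hd m hm using fun k =>
    exists_digits_div_pow_eq_int_add_sum (by omega) hres k ⌊(b : ℝ) ^ k * x⌋
  refine mem_closure_of_tendsto (b := atTop) (f := fun k => ∑' i, d k i / b ^ (i + 1) + m k) ?_
    (Eventually.of_forall fun k => add_mem_add ⟨d k, hd k, rfl⟩ ⟨m k, rfl⟩)
  rw [tendsto_iff_norm_sub_tendsto_zero]
  have hlim : Tendsto (fun k : ℕ => (M / (b - 1) + 1) * (b : ℝ)⁻¹ ^ k) atTop (𝓝 0) := by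
    simpa using (tendsto_pow_atTop_nhds_zero_of_lt_one (by positivity)
      (inv_lt_one_of_one_lt₀ hb')).const_mul (M / (b - 1) + 1)
  refine squeeze_zero (fun _ => norm_nonneg _) (fun k => ?_) hlim
  have hfloor : ‖(⌊(b : ℝ) ^ k * x⌋ : ℝ) / b ^ k - x‖ ≤ 1 / b ^ k := by
    have hpow : (0 : ℝ) < b ^ k := by positivity
    rw [Real.norm_eq_abs, div_sub' hpow.ne', abs_div, abs_of_pos hpow]
    gcongr
    rw [abs_le]
    constructor <;>
      linarith [Int.floor_le ((b : ℝ) ^ k * x), Int.lt_floor_add_one ((b : ℝ) ^ k * x)]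
  calc ‖∑' i, d k i / b ^ (i + 1) + m k - x‖
      = ‖(∑' i, d k i / b ^ (i + 1) - ∑ i ∈ range k, d k i / b ^ (i + 1))
          + ((⌊(b : ℝ) ^ k * x⌋ : ℝ) / b ^ k - x)‖ := by rw [hm k]; congr 1; ring
    _ ≤ M / (b - 1) / b ^ k + 1 / b ^ k :=
      (norm_add_le _ _).trans (add_le_add
        (norm_tsum_sub_sum_div_pow_succ_le hb' (fun i => hM _ (hd k i)) k) hfloor)
    _ = (M / (b - 1) + 1) * (b : ℝ)⁻¹ ^ k := by rw [inv_pow]; ring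

theorem exists_Icc_subset_digitExpansions (hb : 1 < b) (hD : IsCompact D)
    (hres : ∀ n : ℤ, ∃ m : ℤ, (n + b * m : ℝ) ∈ D) :
    ∃ a c : ℝ, a < c ∧ Icc a c ⊆ digitExpansions b D := by
  have hclosed : IsClosed (digitExpansions b D) :=
    (isCompact_digitExpansions (Nat.one_lt_cast.2 hb) hD).isClosed
  obtain ⟨n, z, hz⟩ := nonempty_interior_of_iUnion_of_closed
    (f := fun n : ℤ => (fun x : ℝ => x - n) ⁻¹' digitExpansions b D)
    (fun n => hclosed.preimage (by fun_prop))
    (iUnion_eq_univ_iff.2 (exists_int_sub_mem_digitExpansions hb hD hres))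
  obtain ⟨δ, hδ, hball⟩ := Metric.isOpen_iff.1 isOpen_interior z hz
  refine ⟨z - n, z - n + δ / 2, by linarith, fun w hw => ?_⟩
  have hwn : w + n ∈ Metric.ball z δ := by
    rw [Metric.mem_ball, Real.dist_eq, abs_lt]
    constructor <;> linarith [hw.1, hw.2]
  simpa using interior_subset (hball hwn)

end CompleteResidueSystem

theorem exists_Icc_subset_add_of_emod_four_eq_two (u v : ℤ) (hu : u % 4 = 2) (hv : Odd v) :
    ∃ a c : ℝ, a < c ∧
      Icc a c ⊆ digitExpansions 4 {0, (u : ℝ)} + digitExpansions 4 {0, (v : ℝ)} := by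
  have hpair : ∀ w : ℝ, IsCompact ({0, w} : Set ℝ) := fun w => (toFinite _).isCompact
  rw [← digitExpansions_add (by norm_num) (hpair _).isBounded (hpair _).isBounded]
  refine exists_Icc_subset_digitExpansions (b := 4) (by norm_num) ((hpair _).add (hpair _))
    fun n => ?_
  obtain ⟨m, x, y, hx, hy, hxy⟩ : ∃ m x y : ℤ, (x = 0 ∨ x = u) ∧ (y = 0 ∨ y = v) ∧
      n + 4 * m = x + y := by
    obtain ⟨k, rfl⟩ := hv
    rcases (by omega : n % 4 = 0 ∨ (n - u) % 4 = 0 ∨ (n - (2 * k + 1)) % 4 = 0 ∨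
      (n - u - (2 * k + 1)) % 4 = 0) with h | h | h | h
    · exact ⟨-(n / 4), 0, 0, .inl rfl, .inl rfl, by omega⟩
    · exact ⟨-((n - u) / 4), u, 0, .inr rfl, .inl rfl, by omega⟩
    · exact ⟨-((n - (2 * k + 1)) / 4), 0, _, .inl rfl, .inr rfl, by omega⟩
    · exact ⟨-((n - u - (2 * k + 1)) / 4), u, _, .inr rfl, .inr rfl, by omega⟩
  refine ⟨m, ?_⟩
  have hcast : (n : ℝ) + (4 : ℕ) * m = x + y := by exact_mod_cast hxy
  rw [hcast]
  exact add_mem_add (by rcases hx with rfl | rfl <;> simp) (by rcases hy with rfl | rfl <;> simp)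

theorem exists_eq_four_pow_mul_of_mem_Gamma {m : ℕ} (hm : m ∈ Gamma) :
    ∃ e u : ℕ, u % 4 = 2 ∧ m = 4 ^ e * u := by
  obtain ⟨k, l, hk, hl, rfl⟩ := hm
  refine ⟨l - 1, 2 * (2 * k - 1), by omega, ?_⟩
  rw [show 2 * l - 1 = 2 * (l - 1) + 1 by omega, pow_succ, pow_mul]
  ring

theorem pos_of_mem_Gamma {m : ℕ} (hm : m ∈ Gamma) : 0 < m := by
  obtain ⟨e, u, hu, rfl⟩ := exists_eq_four_pow_mul_of_mem_Gamma hm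
  exact Nat.mul_pos (by positivity) (by omega)

theorem odd_of_mem_Gamma_of_coprime {m n : ℕ} (hm : m ∈ Gamma) (hmn : m.Coprime n) : Odd n := by
  obtain ⟨e, u, hu, rfl⟩ := exists_eq_four_pow_mul_of_mem_Gamma hm
  exact Nat.coprime_two_left.1 (hmn.coprime_dvd_left (Dvd.dvd.mul_left (by omega) _))

theorem exists_Icc_subset_add_of_mem_Gamma {m n : ℕ} (hm : m ∈ Gamma) (hn : Odd n) :
    ∃ a c : ℝ, a < c ∧
      Icc a c ⊆ digitExpansions 4 {0, (m : ℝ)} + digitExpansions 4 {0, (n : ℝ)} := by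
  obtain ⟨e, u, hu, rfl⟩ := exists_eq_four_pow_mul_of_mem_Gamma hm
  obtain ⟨a, c, hac, h⟩ := exists_Icc_subset_add_of_emod_four_eq_two u n (by omega) hn.natCast
  refine ⟨a, c, hac, h.trans (add_subset_add_right ?_)⟩
  simpa [smul_set_insert] using
    digitExpansions_subset_pow_smul (b := 4) (D := {0, (u : ℝ)}) (by norm_num) (by simp) e

theorem smul_add_digitExpansions_subset_cornerC (p q : ℝ) (hq : q ≠ 0) :
    (3 / q) • (digitExpansions 4 {0, p} + digitExpansions 4 {0, q}) ⊆ cornerC (p / q) := by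
  have hpair : ∀ w : ℝ, IsBounded ({0, w} : Set ℝ) := fun w => (toFinite _).isBounded
  rw [← digitExpansions_add (by norm_num) (hpair p) (hpair q)]
  refine (smul_digitExpansions_subset _).trans ?_
  rintro x ⟨d, hd, rfl⟩
  -- `cornerC t` unfolds to `digitExpansions 4 (Omega t)`
  refine ⟨d, fun i => ?_, rfl⟩
  obtain ⟨_, ⟨y, hy, z, hz, rfl⟩, hyz⟩ := hd i
  have hp3 : 3 / q * p = 3 * (p / q) := by ring
  have hq3 : 3 / q * q = 3 := by field_simp
  rw [← hyz]
  rcases hy with rfl | rfl <;> rcases hz with rfl | rfl <;> simp [Omega, mul_add, hp3, hq3]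

theorem contains_interval_of_no_overlap_general (p q : ℕ)
    (hco : Nat.Coprime p q) (hG : p ∈ Gamma ∨ q ∈ Gamma) :
    ∃ a b : ℝ, a < b ∧ Set.Icc a b ⊆ cornerC ((p : ℝ) / q) := by
  obtain ⟨hq, a, c, hac, hI⟩ : 0 < q ∧ ∃ a c : ℝ, a < c ∧
      Icc a c ⊆ digitExpansions 4 {0, (p : ℝ)} + digitExpansions 4 {0, (q : ℝ)} := by
    rcases hG with hpΓ | hqΓ
    · have hq := odd_of_mem_Gamma_of_coprime hpΓ hco
      exact ⟨hq.pos, exists_Icc_subset_add_of_mem_Gamma hpΓ hq⟩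
    · rw [add_comm]
      exact ⟨pos_of_mem_Gamma hqΓ,
        exists_Icc_subset_add_of_mem_Gamma hqΓ (odd_of_mem_Gamma_of_coprime hqΓ hco.symm)⟩
  have hr : (0 : ℝ) < 3 / q := by positivity
  refine ⟨3 / q * a, 3 / q * c, by gcongr, ?_⟩
  rw [← LinearOrderedField.smul_Icc hr]
  exact (smul_set_mono hI).trans (smul_add_digitExpansions_subset_cornerC _ _ (by positivity))

theorem contains_interval_of_no_overlap (p q : ℕ) (hp : 0 < p) (hpq : p < q)
    (hco : Nat.Coprime p q) (hG : p ∈ Gamma ∨ q ∈ Gamma) :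
    ∃ a b : ℝ, a < b ∧ Set.Icc a b ⊆ cornerC ((p : ℝ) / q) :=
  contains_interval_of_no_overlap_general p q hco hG
end

section
/- Let t ∈ (0,1). If t is irrational, then C_t has no exact overlaps; that is, for every k ≥ 1, any two sequences (c_1,…,c_k), (d_1,…,d_k) ∈ Ω_t^k with ∑_{n=1}^k c_n·4^{-n} = ∑_{n=1}^k d_n·4^{-n} must be equal. -/
open Filter Topology

lemma digit_decomp (t x : ℝ) (hx : x ∈ Omega t) :
    ∃ A B : ℤ, (A = 0 ∨ A = 1) ∧ (B = 0 ∨ B = 1) ∧ x = 3*A + 3*B*t := by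
  rcases hx with h | h | h | h
  · exact ⟨0, 0, Or.inl rfl, Or.inl rfl, by rw [h]; push_cast; ring⟩
  · exact ⟨0, 1, Or.inl rfl, Or.inr rfl, by rw [h]; push_cast; ring⟩
  · exact ⟨1, 0, Or.inr rfl, Or.inl rfl, by rw [h]; push_cast; ring⟩
  · exact ⟨1, 1, Or.inr rfl, Or.inr rfl, by rw [h]; push_cast; ring⟩

lemma zero_digits : ∀ (k : ℕ) (e : Fin k → ℤ),
    (∀ n, e n = -1 ∨ e n = 0 ∨ e n = 1) →
    (∑ n : Fin k, e n * 4^(n:ℕ)) = 0 → ∀ n, e n = 0 := by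
  intro k
  induction k with
  | zero => intro e _ _ n; exact n.elim0
  | succ k ih =>
    intro e he hsum
    rw [Fin.sum_univ_succ] at hsum
    simp only [Fin.val_zero, pow_zero, mul_one, Fin.val_succ] at hsum
    have h4 : ∑ i : Fin k, e i.succ * 4 ^ ((i:ℕ)+1)
        = 4 * ∑ i : Fin k, e i.succ * 4 ^ (i:ℕ) := by
      rw [Finset.mul_sum]
      refine Finset.sum_congr rfl fun i _ => by ring
    rw [h4] at hsum
    have he0 := he 0
    have hS : ∑ i : Fin k, e i.succ * 4 ^ (i:ℕ) = 0 := by omega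
    have hrest := ih (fun i => e i.succ) (fun i => he i.succ) hS
    intro n
    induction n using Fin.cases with
    | zero => omega
    | succ i => exact hrest i

lemma int_lin_indep (t : ℝ) (hirr : Irrational t) (p q : ℤ)
    (h : (p:ℝ) + t*q = 0) : p = 0 ∧ q = 0 := by
  by_cases hq : q = 0
  · subst hq
    simp only [Int.cast_zero, mul_zero, add_zero] at h
    exact ⟨by exact_mod_cast h, rfl⟩
  · exfalso
    apply hirr
    refine ⟨(-p)/q, ?_⟩
    have hq' : (q:ℝ) ≠ 0 := Int.cast_ne_zero.mpr hq
    push_cast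
    field_simp
    linarith

theorem no_overlap_of_irrational (t : ℝ) (ht : t ∈ Set.Ioo (0:ℝ) 1)
    (hirr : Irrational t) :
    ∀ k : ℕ, 0 < k → ∀ c d : Fin k → ℝ,
      (∀ n, c n ∈ Omega t) → (∀ n, d n ∈ Omega t) →
      ∑ n : Fin k, c n / 4^((n : ℕ)+1) = ∑ n : Fin k, d n / 4^((n : ℕ)+1) →
      c = d := by
  intro k hk c d hc hd hsum
  choose Ac Bc hAc hBc hceq using fun n => digit_decomp t (c n) (hc n)
  choose Ad Bd hAd hBd hdeq using fun n => digit_decomp t (d n) (hd n)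
  set eA : Fin k → ℤ := fun n => Ac n - Ad n with heA
  set eB : Fin k → ℤ := fun n => Bc n - Bd n with heB
  -- the difference sum vanishes
  have key : ∑ n : Fin k, ((eA n : ℝ) + (eB n : ℝ) * t) / 4^((n:ℕ)+1) = 0 := by
    have h3 : (3:ℝ) * ∑ n : Fin k, ((eA n : ℝ) + (eB n : ℝ) * t) / 4^((n:ℕ)+1)
        = ∑ n : Fin k, c n / 4^((n:ℕ)+1) - ∑ n : Fin k, d n / 4^((n:ℕ)+1) := by
      rw [← Finset.sum_sub_distrib, Finset.mul_sum]
      refine Finset.sum_congr rfl fun n _ => ?_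
      rw [hceq n, hdeq n, heA, heB]
      push_cast
      ring
    rw [hsum, sub_self] at h3
    linarith
  set P : ℤ := ∑ n : Fin k, eA n * 4^(k - ((n:ℕ)+1)) with hP
  set Q : ℤ := ∑ n : Fin k, eB n * 4^(k - ((n:ℕ)+1)) with hQ
  have hPQ : (P:ℝ) + t * (Q:ℝ) = 0 := by
    have hcast : (P:ℝ) + t * (Q:ℝ)
        = ∑ n : Fin k, ((eA n : ℝ) + t * (eB n : ℝ)) * 4^(k - ((n:ℕ)+1)) := by
      rw [hP, hQ]
      push_cast
      rw [Finset.mul_sum, ← Finset.sum_add_distrib]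
      refine Finset.sum_congr rfl fun n _ => by ring
    rw [hcast]
    have hterm : ∀ n : Fin k, ((eA n : ℝ) + t * (eB n : ℝ)) * 4^(k - ((n:ℕ)+1))
        = 4^k * (((eA n : ℝ) + (eB n : ℝ) * t) / 4^((n:ℕ)+1)) := by
      intro n
      have hpow : (4:ℝ)^(k - ((n:ℕ)+1)) * 4^((n:ℕ)+1) = 4^k := by
        rw [← pow_add]
        congr 1
        omega
      have h1 : (4:ℝ)^((n:ℕ)+1) ≠ 0 := by positivity
      field_simp
      rw [mul_assoc, hpow]
    rw [Finset.sum_congr rfl fun n _ => hterm n, ← Finset.mul_sum, key, mul_zero]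
  obtain ⟨hP0, hQ0⟩ := int_lin_indep t hirr P Q hPQ
  -- convert to standard base-4 digit uniqueness via Fin.rev
  have hrange : ∀ n : Fin k, eA n = -1 ∨ eA n = 0 ∨ eA n = 1 := by
    intro n
    have h1 := hAc n; have h2 := hAd n
    show Ac n - Ad n = -1 ∨ Ac n - Ad n = 0 ∨ Ac n - Ad n = 1
    omega
  have hrangeB : ∀ n : Fin k, eB n = -1 ∨ eB n = 0 ∨ eB n = 1 := by
    intro n
    have h1 := hBc n; have h2 := hBd n
    show Bc n - Bd n = -1 ∨ Bc n - Bd n = 0 ∨ Bc n - Bd n = 1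
    omega
  have hrev : ∀ (e : Fin k → ℤ), (∑ n : Fin k, e n * 4^(k - ((n:ℕ)+1)))
      = ∑ m : Fin k, e m.rev * 4^(m:ℕ) := by
    intro e
    refine Fintype.sum_bijective Fin.rev Fin.rev_bijective _ _ fun x => ?_
    rw [Fin.rev_rev, Fin.val_rev]
  have hA0 : ∀ n, eA n = 0 := by
    have := zero_digits k (fun m => eA m.rev) (fun m => hrange m.rev)
      (by rw [← hrev]; exact hP0)
    intro n
    simpa using this n.rev
  have hB0 : ∀ n, eB n = 0 := by
    have := zero_digits k (fun m => eB m.rev) (fun m => hrangeB m.rev)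
      (by rw [← hrev]; exact hQ0)
    intro n
    simpa using this n.rev
  funext n
  have hA : Ac n = Ad n := by have h : Ac n - Ad n = 0 := hA0 n; omega
  have hB : Bc n = Bd n := by have h : Bc n - Bd n = 0 := hB0 n; omega
  rw [hceq n, hdeq n, hA, hB]
end

section
/- Let p, q be coprime positive integers with p < q and let ℓ be a positive integer. Then the polynomial 1 + X^{2^{2ℓ-1}} divides the polynomial 1 + X^{3p} + X^{3q} + X^{3p+3q} in ℤ[X] if and only if p ∈ Γ_ℓ or q ∈ Γ_ℓ. -/
open Polynomial

/-- `Γ_ℓ = {(2k-1)·2^{2ℓ-1} : k ∈ ℕ_{>0}}`. -/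
def GammaL (l : ℕ) : Set ℕ := {m | ∃ k : ℕ, 0 < k ∧ m = (2*k-1) * 2^(2*l-1)}

open Complex in
/-- Divisibility by `1 + X^{2^s}` is equivalent to vanishing at a primitive
`2^{s+1}`-th root of unity. -/
lemma dvd_iff_aeval_eq_zero (s : ℕ) (g : Polynomial ℤ) :
    ((1 + X ^ (2 ^ s) : Polynomial ℤ) ∣ g) ↔
      aeval (Complex.exp (2 * Real.pi * I / (2 ^ (s + 1) : ℕ))) g = 0 := by
  set ζ := Complex.exp (2 * Real.pi * I / (2 ^ (s + 1) : ℕ)) with hζdef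
  have hn : (2 ^ (s + 1) : ℕ) ≠ 0 := by positivity
  have hζ : IsPrimitiveRoot ζ (2 ^ (s + 1)) := Complex.isPrimitiveRoot_exp _ hn
  have hpos : 0 < 2 ^ (s + 1) := Nat.pos_of_ne_zero hn
  have hcyc : cyclotomic (2 ^ (s + 1)) ℤ = 1 + X ^ (2 ^ s) := by
    rw [cyclotomic_prime_pow_eq_geom_sum Nat.prime_two]
    simp [Finset.sum_range_succ]
  have hmin : cyclotomic (2 ^ (s + 1)) ℤ = minpoly ℤ ζ :=
    cyclotomic_eq_minpoly hζ hpos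
  have hint : IsIntegral ℤ ζ := hζ.isIntegral hpos
  rw [← hcyc, hmin, minpoly.isIntegrallyClosed_dvd_iff hint]

lemma pow_eq_neg_one_iff' {ζ : ℂ} {n m : ℕ} (hζ : IsPrimitiveRoot ζ n) :
    ζ ^ m = -1 ↔ (n ∣ 2 * m ∧ ¬ n ∣ m) := by
  constructor
  · intro h
    refine ⟨(hζ.pow_eq_one_iff_dvd _).mp ?_, fun hd => ?_⟩
    · rw [mul_comm, pow_mul, h]; ring
    · rw [(hζ.pow_eq_one_iff_dvd _).mpr hd] at h
      norm_num at h
  · rintro ⟨h1, h2⟩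
    have h1' : (ζ ^ m) ^ 2 = 1 := by
      rw [← pow_mul, mul_comm]; exact (hζ.pow_eq_one_iff_dvd _).mpr h1
    have h2' : ζ ^ m ≠ 1 := fun h => h2 ((hζ.pow_eq_one_iff_dvd _).mp h)
    rcases sq_eq_one_iff.mp h1' with h | h
    · exact absurd h h2'
    · exact h

/-- Arithmetic characterization of membership in `Γ_ℓ`. -/
lemma mem_GammaL_iff {m l : ℕ} (hm : 0 < m) (hl : 0 < l) :
    m ∈ GammaL l ↔ (2 ^ (2 * l) ∣ 2 * m ∧ ¬ 2 ^ (2 * l) ∣ m) := by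
  obtain ⟨s, hs⟩ : ∃ s, 2 * l - 1 = s := ⟨2 * l - 1, rfl⟩
  have hsl : 2 * l = s + 1 := by omega
  rw [hsl]
  have hps : 0 < (2:ℕ) ^ s := pow_pos two_pos s
  constructor
  · rintro ⟨k, hk, rfl⟩
    rw [hs]
    constructor
    · exact ⟨2 * k - 1, by rw [pow_succ]; ring⟩
    · rintro ⟨c, hc⟩
      rw [pow_succ] at hc
      have h2 : 2 * k - 1 = 2 * c :=
        Nat.eq_of_mul_eq_mul_right hps (by rw [hc]; ring)
      omega
  · rintro ⟨h1, h2⟩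
    have hdvd : 2 ^ s ∣ m := by
      rcases h1 with ⟨c, hc⟩
      refine ⟨c, Nat.eq_of_mul_eq_mul_left two_pos ?_⟩
      rw [hc, pow_succ]; ring
    obtain ⟨t, ht⟩ := hdvd
    have hodd : t % 2 = 1 := by
      rcases Nat.even_or_odd t with he | ho
      · obtain ⟨u, hu⟩ := he
        exfalso; apply h2
        exact ⟨u, by rw [ht, hu, pow_succ]; ring⟩
      · obtain ⟨u, hu⟩ := ho; omega
    refine ⟨(t + 1) / 2, by omega, ?_⟩
    rw [hs, ht]
    have : 2 * ((t + 1) / 2) - 1 = t := by omega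
    rw [this, mul_comm]

theorem divisible_iff_mem_GammaL (p q l : ℕ) (hp : 0 < p) (hpq : p < q)
    (hco : Nat.Coprime p q) (hl : 0 < l) :
    ((1 + X ^ (2 ^ (2 * l - 1)) : Polynomial ℤ) ∣
        (1 + X ^ (3 * p) + X ^ (3 * q) + X ^ (3 * p + 3 * q))) ↔
      p ∈ GammaL l ∨ q ∈ GammaL l := by
  set s := 2 * l - 1 with hs
  have hsl : s + 1 = 2 * l := by omega
  set ζ := Complex.exp (2 * Real.pi * Complex.I / (2 ^ (s + 1) : ℕ)) with hζdef
  have hn : (2 ^ (s + 1) : ℕ) ≠ 0 := by positivity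
  have hζ : IsPrimitiveRoot ζ (2 ^ (s + 1)) := Complex.isPrimitiveRoot_exp _ hn
  rw [dvd_iff_aeval_eq_zero]
  have heval : (aeval ζ) (1 + X ^ (3 * p) + X ^ (3 * q) + X ^ (3 * p + 3 * q) : Polynomial ℤ)
      = (1 + ζ ^ (3 * p)) * (1 + ζ ^ (3 * q)) := by
    simp [pow_add]
    ring
  rw [heval, mul_eq_zero]
  have key : ∀ m : ℕ, 0 < m → ((1 + ζ ^ (3 * m) = 0) ↔ m ∈ GammaL l) := by
    intro m hm
    have h3 : Nat.Coprime (2 ^ (2 * l)) 3 := by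
      apply Nat.Coprime.pow_left
      norm_num
    rw [mem_GammaL_iff hm hl]
    have h1 : 1 + ζ ^ (3 * m) = 0 ↔ ζ ^ (3 * m) = -1 := by
      constructor <;> intro h <;> linear_combination h
    rw [h1, pow_eq_neg_one_iff' hζ, hsl]
    constructor
    · rintro ⟨ha, hb⟩
      refine ⟨h3.dvd_of_dvd_mul_left ?_, fun hd => hb (hd.mul_left 3)⟩
      rwa [show 3 * (2 * m) = 2 * (3 * m) by ring]
    · rintro ⟨ha, hb⟩
      refine ⟨?_, fun hd => hb (h3.dvd_of_dvd_mul_left hd)⟩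
      rw [show 2 * (3 * m) = 3 * (2 * m) by ring]
      exact ha.mul_left 3
  rw [key p hp, key q (lt_trans hp hpq)]
end

section
/- Let p, q be coprime positive integers with p < q, let ℓ be a positive integer, set τ_ℓ = 2^{2ℓ-1}, and assume τ_ℓ ≤ 3p+3q ≤ 2τ_ℓ. Then rank(A,b) = rank(A) + 1, where (A,b) denotes the matrix A augmented by the column b. -/
/-- The `(3p+3q+1) × (3p+3q-τ+1)` matrix whose `n`-th column is the coefficient
vector of `x^(n-1)·(1 + x^τ)` (indices here start at 0). -/
def cornerA (p q τ : ℕ) : Matrix (Fin (3*p+3*q+1)) (Fin (3*p+3*q-τ+1)) ℚ :=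
  Matrix.of fun m n => if (m : ℕ) = (n : ℕ) ∨ (m : ℕ) = (n : ℕ) + τ then 1 else 0

/-- The coefficient vector of `1 + x^(3p) + x^(3q) + x^(3p+3q)`. -/
def cornerb (p q : ℕ) : Fin (3*p+3*q+1) → ℚ :=
  fun m => if (m : ℕ) = 0 ∨ (m : ℕ) = 3*p ∨ (m : ℕ) = 3*q ∨ (m : ℕ) = 3*p+3*q
    then 1 else 0

/-- The augmented matrix `(A, b)`. -/
def cornerAb (p q τ : ℕ) : Matrix (Fin (3*p+3*q+1)) (Fin (3*p+3*q-τ+1+1)) ℚ :=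
  Matrix.of fun m n =>
    if h : (n : ℕ) < 3*p+3*q-τ+1 then cornerA p q τ m ⟨n, h⟩ else cornerb p q m

/-!
Since `τ` is a power of two, `3 ∤ τ`; hence `τ ≤ 3p+3q < 2τ`, the bound being strict because
`3 ∣ 3p+3q`. So every column `x^n (1 + x^τ)` with `n ≤ 3p+3q-τ < τ` has equal coefficients at
`x^0` and `x^τ`, and so does every vector in the column space of `A`. But `b` has coefficient `1`
at `x^0` and, as `τ` is not a multiple of `3`, coefficient `0` at `x^τ`. Hence `b` is not in the
column space, and adjoining it raises the rank by one.
-/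

open Submodule

namespace Submodule

variable {K V : Type*} [DivisionRing K] [AddCommGroup V] [Module K V]

theorem finrank_span_insert_of_notMem_span {s : Set V} [FiniteDimensional K (span K s)]
    {x : V} (hx : x ∉ span K s) :
    Module.finrank K (span K (insert x s)) = Module.finrank K (span K s) + 1 := by
  have hx0 : x ≠ 0 := fun h => hx (h ▸ zero_mem _)
  have hdisj : Disjoint (span K s) (K ∙ x) := disjoint_span_singleton.2 fun h => absurd h hx
  have := finrank_sup_add_finrank_inf_eq (span K s) (K ∙ x)
  rw [hdisj.eq_bot, finrank_bot, add_zero, finrank_span_singleton hx0] at this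
  rw [span_insert, sup_comm, this]

end Submodule

namespace Matrix

variable {m n K : Type*} [Fintype n] [Field K]

theorem notMem_span_cols_of_row_eq {M : Matrix m n K} {b : m → K} {i j : m}
    (hrow : M i = M j) (hb : b i ≠ b j) : b ∉ span K (Set.range M.col) := by
  rw [← range_mulVecLin]
  rintro ⟨v, rfl⟩
  exact hb (by simp only [mulVecLin_apply, mulVec, hrow])

theorem rank_eq_rank_add_one_of_range_col_eq_insert {n' : Type*} [Fintype n']
    {M : Matrix m n K} {M' : Matrix m n' K} {b : m → K}
    (hcols : Set.range M'.col = insert b (Set.range M.col))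
    (hb : b ∉ span K (Set.range M.col)) : M'.rank = M.rank + 1 := by
  have := FiniteDimensional.span_of_finite K (Set.finite_range M.col)
  rw [rank_eq_finrank_span_cols, rank_eq_finrank_span_cols, hcols,
    finrank_span_insert_of_notMem_span hb]

end Matrix

open Matrix

theorem range_col_cornerAb (p q τ : ℕ) :
    Set.range (cornerAb p q τ).col = insert (cornerb p q) (Set.range (cornerA p q τ).col) := by
  ext x
  simp only [Set.mem_range, Set.mem_insert_iff]
  constructor
  · rintro ⟨n, rfl⟩
    by_cases h : (n : ℕ) < 3*p+3*q-τ+1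
    · refine Or.inr ⟨⟨n, h⟩, funext fun m => ?_⟩
      simp only [cornerAb, col_apply, of_apply, dif_pos h]
    · exact Or.inl (funext fun m => by simp only [cornerAb, col_apply, of_apply, dif_neg h])
  · rintro (rfl | ⟨n, rfl⟩)
    · refine ⟨Fin.last _, funext fun m => ?_⟩
      simp only [cornerAb, col_apply, of_apply, Fin.val_last, lt_irrefl, dite_false]
    · refine ⟨n.castSucc, funext fun m => ?_⟩
      simp only [cornerAb, col_apply, of_apply, Fin.val_castSucc, n.isLt, dite_true]

theorem cornerA_row_zero_eq_row_tau {p q τ : ℕ} (hτ : τ ≤ 3*p+3*q) (hlt : 3*p+3*q < 2*τ) :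
    cornerA p q τ ⟨0, by omega⟩ = cornerA p q τ ⟨τ, by omega⟩ := by
  funext n
  have hrows : (0 = (n : ℕ) ∨ 0 = n + τ) ↔ (τ = n ∨ τ = n + τ) := by omega
  simp only [cornerA, of_apply, hrows]

theorem cornerb_zero_ne_cornerb_tau {p q τ : ℕ} (hτ : τ ≤ 3*p+3*q) (h3 : ¬ 3 ∣ τ) :
    cornerb p q ⟨0, by omega⟩ ≠ cornerb p q ⟨τ, by omega⟩ := by
  have hτ0 : τ ≠ 0 := by rintro rfl; exact h3 (dvd_zero 3)
  have h3p : τ ≠ 3*p := fun h => h3 ⟨p, h⟩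
  have h3q : τ ≠ 3*q := fun h => h3 ⟨q, h⟩
  have h3pq : τ ≠ 3*p+3*q := fun h => h3 ⟨p+q, by omega⟩
  simp [cornerb, hτ0, h3p, h3q, h3pq]

theorem rank_succ_of_small_general (p q l : ℕ) (hτ : 2^(2*l-1) ≤ 3*p+3*q)
    (hle : 3*p+3*q ≤ 2 * 2^(2*l-1)) :
    (cornerAb p q (2^(2*l-1))).rank = (cornerA p q (2^(2*l-1))).rank + 1 := by
  set τ := 2^(2*l-1)
  have h3 : ¬ 3 ∣ τ := fun h => by
    have := Nat.Prime.dvd_of_dvd_pow Nat.prime_three h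
    omega
  have hlt : 3*p+3*q < 2*τ := by omega
  exact rank_eq_rank_add_one_of_range_col_eq_insert (range_col_cornerAb p q τ)
    (notMem_span_cols_of_row_eq (cornerA_row_zero_eq_row_tau hτ hlt)
      (cornerb_zero_ne_cornerb_tau hτ h3))

theorem rank_succ_of_small (p q l : ℕ) (hp : 0 < p) (hpq : p < q)
    (hco : Nat.Coprime p q) (hl : 0 < l) (hτ : 2^(2*l-1) ≤ 3*p+3*q)
    (hle : 3*p+3*q ≤ 2 * 2^(2*l-1)) :
    (cornerAb p q (2^(2*l-1))).rank = (cornerA p q (2^(2*l-1))).rank + 1 :=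
  rank_succ_of_small_general p q l hτ hle
end

section
/- Let p, q be coprime positive integers with p < q, let ℓ be a positive integer, set τ_ℓ = 2^{2ℓ-1}, and assume 3p+3q ≤ 3τ_ℓ and 3p > τ_ℓ. Then rank(A,b) = rank(A) + 1, where (A,b) denotes the matrix A augmented by the column b. -/
/-!
Both matrices have full column rank. Reading `A *ᵥ v` as the coefficients of `(1 + x^τ) · V(x)`,
where `V` is the polynomial with coefficient vector `v`, row `k` says `v k + v (k - τ) = 0`, so the
kernel of `A` is trivial by induction on `k`. For a kernel vector `(v, c)` of `(A, b)`, the rows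
`3q - τ`, `3q` and `3q + τ` give `v (3q - τ) = 0`, then `v (3q) = -c`, then `v (3q) = 0`: the
window `τ < 3p < 3q < 2τ` keeps `b` away from the first and third rows and pushes the out-of-range
neighbours `3q - 2τ` and `3q + τ` off both ends of `v`. Hence `c = 0` and `v = 0`.
-/

open Matrix

theorem Matrix.rank_eq_card_of_injective {R m n : Type*} [CommRing R] [StrongRankCondition R]
    [Fintype m] [Fintype n] {A : Matrix m n R} (hA : Function.Injective A.mulVecLin) :
    A.rank = Fintype.card n := by
  rw [Matrix.rank, LinearMap.finrank_range_of_inj hA, Module.finrank_fintype_fun_eq_card]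

section ZeroExtend

variable {α : Type*} {K : ℕ}

def zeroExtend [Zero α] (v : Fin K → α) (i : ℤ) : α :=
  if h : 0 ≤ i ∧ i < K then v ⟨i.toNat, by omega⟩ else 0

theorem zeroExtend_natCast [Zero α] (v : Fin K → α) {k : ℕ} (hk : k < K) :
    zeroExtend v k = v ⟨k, hk⟩ := by
  simp [zeroExtend, hk]

theorem zeroExtend_eq_zero [Zero α] (v : Fin K → α) {i : ℤ} (hi : i < 0 ∨ K ≤ i) :
    zeroExtend v i = 0 :=
  dif_neg (by omega)

theorem sum_ite_eq_zeroExtend [AddCommMonoid α] (v : Fin K → α) (i : ℤ) :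
    ∑ n : Fin K, (if i = n then v n else 0) = zeroExtend v i := by
  by_cases hi : 0 ≤ i ∧ i < K
  · obtain ⟨k, rfl⟩ := Int.eq_ofNat_of_zero_le hi.1
    have hk : k < K := by omega
    rw [zeroExtend_natCast v hk,
      Finset.sum_eq_single ⟨k, hk⟩ (fun n _ hn => if_neg ?_) (by simp)]
    · simp
    · exact fun h => hn (Fin.ext (by exact_mod_cast h.symm))
  · rw [zeroExtend_eq_zero v (by omega)]
    exact Finset.sum_eq_zero fun n _ => if_neg (by omega)

end ZeroExtend

section Corner

variable {p q τ : ℕ}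

theorem cornerA_mulVec_apply (hτ : 0 < τ) (v : Fin (3*p+3*q-τ+1) → ℚ) (m : Fin (3*p+3*q+1)) :
    (cornerA p q τ *ᵥ v) m = zeroExtend v m + zeroExtend v ((m : ℤ) - τ) := by
  have hsplit : ∀ n : Fin (3*p+3*q-τ+1),
      (if (m : ℕ) = n ∨ (m : ℕ) = n + τ then (1 : ℚ) else 0) * v n
        = (if (m : ℤ) = n then v n else 0) + (if (m : ℤ) - τ = n then v n else 0) := by
    intro n
    by_cases h1 : (m : ℕ) = n <;> by_cases h2 : (m : ℕ) = n + τ <;>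
      simp only [h1, h2, true_or, or_true, or_self, if_true, if_false] <;>
      split_ifs <;> first | omega | ring
  simp only [mulVec, dotProduct, cornerA, of_apply, hsplit, Finset.sum_add_distrib,
    sum_ite_eq_zeroExtend]

theorem cornerAb_mulVec (w : Fin (3*p+3*q-τ+1+1) → ℚ) :
    cornerAb p q τ *ᵥ w = cornerA p q τ *ᵥ Fin.init w + w (Fin.last _) • cornerb p q := by
  ext m
  rw [Pi.add_apply, Pi.smul_apply, smul_eq_mul, mulVec, dotProduct, Fin.sum_univ_castSucc]
  simp only [cornerAb, of_apply, Fin.val_castSucc, Fin.is_lt, dif_pos, Fin.val_last, lt_irrefl,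
    not_false_eq_true, dif_neg]
  rw [mul_comm (w _)]
  rfl

theorem cornerA_injective (hτ : 0 < τ) : Function.Injective (cornerA p q τ).mulVecLin := by
  refine (injective_iff_map_eq_zero _).2 fun v hv => ?_
  have hrow (m : Fin (3*p+3*q+1)) : zeroExtend v m + zeroExtend v ((m : ℤ) - τ) = 0 := by
    rw [← cornerA_mulVec_apply hτ]
    exact congrFun hv m
  have hzero (k : ℕ) : zeroExtend v k = 0 := by
    induction k using Nat.strong_induction_on with
    | _ k ih =>
      by_cases hk : k < 3*p+3*q-τ+1
      · have hprev : zeroExtend v ((k : ℤ) - τ) = 0 := by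
          by_cases hkτ : τ ≤ k
          · rw [show (k : ℤ) - τ = ((k - τ : ℕ) : ℤ) by omega]
            exact ih _ (by omega)
          · exact zeroExtend_eq_zero v (by omega)
        simpa [hprev] using hrow ⟨k, by omega⟩
      · exact zeroExtend_eq_zero v (by omega)
  funext n
  simpa [zeroExtend_natCast v n.isLt] using hzero n

theorem cornerAb_injective (hτp : τ < 3*p) (hpq : p < q) (hqτ : 3*q < 2*τ) :
    Function.Injective (cornerAb p q τ).mulVecLin := by
  have hτ : 0 < τ := by omega
  refine (injective_iff_map_eq_zero _).2 fun w hw => ?_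
  set v := Fin.init w
  set c := w (Fin.last _)
  have hsplit : cornerA p q τ *ᵥ v + c • cornerb p q = 0 := by
    rw [← cornerAb_mulVec]
    exact hw
  have hrow (k : ℕ) (hk : k < 3*p+3*q+1) :
      zeroExtend v k + zeroExtend v ((k : ℤ) - τ) + c * cornerb p q ⟨k, hk⟩ = 0 := by
    simpa [cornerA_mulVec_apply hτ] using congrFun hsplit ⟨k, hk⟩
  have hb_off (k : ℕ) (hk : k < 3*p+3*q+1)
      (hk' : k ≠ 0 ∧ k ≠ 3*p ∧ k ≠ 3*q ∧ k ≠ 3*p+3*q) : cornerb p q ⟨k, hk⟩ = 0 :=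
    if_neg (by simp only; omega)
  have hv_before : zeroExtend v ((3*q - τ : ℕ) : ℤ) = 0 := by
    have h := hrow (3*q - τ) (by omega)
    rwa [zeroExtend_eq_zero v (i := ((3*q - τ : ℕ) : ℤ) - τ) (by omega), hb_off _ _ (by omega),
      mul_zero, add_zero, add_zero] at h
  have hv_mid : zeroExtend v (3*q : ℕ) = -c := by
    have h := hrow (3*q) (by omega)
    rw [show ((3*q : ℕ) : ℤ) - τ = ((3*q - τ : ℕ) : ℤ) by omega, hv_before,
      show cornerb p q ⟨3*q, _⟩ = 1 from if_pos (by simp), mul_one, add_zero] at h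
    linarith
  have hc : c = 0 := by
    have h := hrow (3*q + τ) (by omega)
    rw [zeroExtend_eq_zero v (by omega),
      show ((3*q + τ : ℕ) : ℤ) - τ = ((3*q : ℕ) : ℤ) by omega, hv_mid,
      hb_off _ _ (by omega), mul_zero, add_zero] at h
    linarith
  have hv : v = 0 := by
    refine cornerA_injective hτ ?_
    simpa [hc] using hsplit
  funext i
  induction i using Fin.lastCases with
  | last => exact hc
  | cast i => exact congrFun hv i

end Corner

theorem rank_succ_of_mid_general (p q l : ℕ) (hpq : p < q)
    (hle : 3*p+3*q ≤ 3 * 2^(2*l-1)) (hgt : 3*p > 2^(2*l-1)) :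
    (cornerAb p q (2^(2*l-1))).rank = (cornerA p q (2^(2*l-1))).rank + 1 := by
  rw [rank_eq_card_of_injective (cornerAb_injective hgt hpq (by omega)),
    rank_eq_card_of_injective (cornerA_injective (by positivity)), Fintype.card_fin,
    Fintype.card_fin]

theorem rank_succ_of_mid (p q l : ℕ) (hp : 0 < p) (hpq : p < q)
    (hco : Nat.Coprime p q) (hl : 0 < l)
    (hle : 3*p+3*q ≤ 3 * 2^(2*l-1)) (hgt : 3*p > 2^(2*l-1)) :
    (cornerAb p q (2^(2*l-1))).rank = (cornerA p q (2^(2*l-1))).rank + 1 :=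
  rank_succ_of_mid_general p q l hpq hle hgt
end

section
/- Let p, q be coprime positive integers with p < q, let ℓ be a positive integer, set τ_ℓ = 2^{2ℓ-1}, and assume 3p < τ_ℓ and τ_ℓ ≤ 3p+3q. Then rank(A,b) = rank(A) if and only if q ∈ Γ_ℓ, where Γ_ℓ = {(2k-1)·τ_ℓ : k a positive integer} and (A,b) denotes the matrix A augmented by the column b. -/
/-! The columns of `A` are the coefficient vectors of `xⁿ(1 + x^τ)` for `n ≤ 3p+3q-τ`, so `b`
lies in the column space of `A` iff `1 + x^τ` divides `B = (1 + x^(3p))(1 + x^(3q))`; the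
degree bound on the quotient is automatic. A primitive `2τ`-th root of unity `ζ` is a root of
`1 + x^τ`, and `ζ^m = -1` exactly when `m` is an odd multiple of `τ`. As `3p < τ`, divisibility
is therefore equivalent to `3q` being an odd multiple of `τ`, and since `τ` is a power of two
this means that `q` is one. -/

open Polynomial Matrix

theorem Matrix.rank_of_snoc_eq_rank_iff {m K : Type*} [Fintype m] [Field K] {n : ℕ}
    (A : Matrix m (Fin n) K) (b : m → K) :
    (Matrix.of fun i => Fin.snoc (α := fun _ => K) (A i) (b i)).rank = A.rank ↔
      ∃ c, A *ᵥ c = b := by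
  have hcols : Set.range (Matrix.of fun i => Fin.snoc (α := fun _ => K) (A i) (b i)).col =
      insert b (Set.range A.col) := by
    rw [← Fin.range_snoc]
    congr 1
    ext j i
    refine Fin.lastCases ?_ (fun j => ?_) j
    · simp only [col_apply, of_apply, Fin.snoc_last]
    · simp only [col_apply, of_apply, Fin.snoc_castSucc]
  have hb : b ∈ Set.range A.mulVecLin ↔ b ∈ Submodule.span K (Set.range A.col) := by
    rw [← Matrix.range_mulVecLin]
    rfl
  rw [rank_eq_finrank_span_cols, rank_eq_finrank_span_cols, hcols]
  refine ⟨fun h => ?_, fun h => ?_⟩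
  · have hspan := Submodule.eq_of_le_of_finrank_eq
      (Submodule.span_mono (Set.subset_insert _ _)) h.symm
    exact hb.2 (hspan ▸ Submodule.subset_span (Set.mem_insert _ _))
  · rw [Submodule.span_insert_eq_span (hb.1 h)]

theorem IsPrimitiveRoot.pow_eq_neg_one_of_two_mul {R : Type*} [CommRing R] [NoZeroDivisors R]
    {ζ : R} {τ : ℕ} (h : IsPrimitiveRoot ζ (2 * τ)) (hτ : τ ≠ 0) : ζ ^ τ = -1 := by
  have h2 := h.pow_of_dvd hτ (dvd_mul_left τ 2)
  rw [Nat.mul_div_cancel _ (Nat.pos_of_ne_zero hτ)] at h2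
  exact h2.eq_neg_one_of_two_right

theorem IsPrimitiveRoot.two_mul_dvd_add_of_pow_eq_neg_one {R : Type*} [CommRing R]
    [NoZeroDivisors R] {ζ : R} {τ m : ℕ} (h : IsPrimitiveRoot ζ (2 * τ)) (hτ : τ ≠ 0)
    (hm : ζ ^ m = -1) : 2 * τ ∣ m + τ := by
  rw [← h.pow_eq_one_iff_dvd, pow_add, hm, h.pow_eq_neg_one_of_two_mul hτ, neg_one_mul, neg_neg]

theorem Polynomial.natDegree_one_add_X_pow {R : Type*} [CommRing R] [Nontrivial R] (n : ℕ) :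
    ((1 : R[X]) + X ^ n).natDegree = n := by
  rw [add_comm, ← C_1, natDegree_X_pow_add_C]

theorem Polynomial.exists_mem_degreeLT_mul_eq_iff_dvd {R : Type*} [CommRing R] [IsDomain R]
    {f B : R[X]} {k : ℕ} (hf : f ≠ 0) (hB : B.natDegree < k + f.natDegree) :
    (∃ g ∈ degreeLT R k, f * g = B) ↔ f ∣ B := by
  refine ⟨fun ⟨g, _, h⟩ => ⟨g, h.symm⟩, fun ⟨g, hg⟩ => ⟨g, ?_, hg.symm⟩⟩
  rcases eq_or_ne g 0 with rfl | hg0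
  · exact Submodule.zero_mem _
  rw [mem_degreeLT, ← natDegree_lt_iff_degree_lt hg0]
  rw [hg, natDegree_mul hf hg0] at hB
  omega

theorem Polynomial.one_add_X_pow_dvd_mul_iff {τ a b : ℕ} (haτ : a < τ) :
    (1 + X ^ τ : ℚ[X]) ∣ (1 + X ^ a) * (1 + X ^ b) ↔ ∃ t, Odd t ∧ b = t * τ := by
  constructor
  · rintro ⟨g, hg⟩
    have hτ : τ ≠ 0 := by omega
    have hζ := Complex.isPrimitiveRoot_exp (2 * τ) (by omega)
    set ζ := Complex.exp (2 * Real.pi * Complex.I / ↑(2 * τ))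
    have hroot : (1 + ζ ^ a) * (1 + ζ ^ b) = 0 := by
      have hgζ := congrArg (aeval ζ) hg
      simp only [map_mul, map_add, map_one, map_pow, aeval_X] at hgζ
      rw [hgζ, hζ.pow_eq_neg_one_of_two_mul hτ, add_neg_cancel, zero_mul]
    rcases mul_eq_zero.mp hroot with ha | hb
    · have := Nat.le_of_dvd (by omega)
        (hζ.two_mul_dvd_add_of_pow_eq_neg_one hτ (eq_neg_of_add_eq_zero_right ha))
      omega
    · obtain ⟨s, hs⟩ :=
        hζ.two_mul_dvd_add_of_pow_eq_neg_one hτ (eq_neg_of_add_eq_zero_right hb)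
      obtain ⟨r, rfl⟩ := Nat.exists_eq_succ_of_ne_zero (show s ≠ 0 by rintro rfl; omega)
      exact ⟨2 * r + 1, odd_two_mul_add_one r, by linarith⟩
  · rintro ⟨t, ht, rfl⟩
    have hdvd := Odd.add_dvd_pow_add_pow (X ^ τ : ℚ[X]) 1 ht
    rw [one_pow, ← pow_mul, mul_comm τ, add_comm _ 1, add_comm _ 1] at hdvd
    exact hdvd.mul_left _

theorem cornerAb_eq_snoc (p q τ : ℕ) :
    cornerAb p q τ =
      Matrix.of fun i => Fin.snoc (α := fun _ => ℚ) (cornerA p q τ i) (cornerb p q i) :=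
  rfl

theorem cornerA_apply {p q τ : ℕ} (hτ : 0 < τ) (m : Fin (3*p+3*q+1)) (n : Fin (3*p+3*q-τ+1)) :
    cornerA p q τ m n = ((1 + X ^ τ) * X ^ (n : ℕ) : ℚ[X]).coeff m := by
  simp only [cornerA, of_apply, coeff_mul_X_pow', add_mul, one_mul, coeff_add, coeff_X_pow]
  split_ifs <;> first | omega | norm_num

theorem mulVec_cornerA_degreeLTEquiv {p q τ : ℕ} (hτ : 0 < τ)
    (g : degreeLT ℚ (3*p+3*q-τ+1)) (m : Fin (3*p+3*q+1)) :
    (cornerA p q τ *ᵥ degreeLTEquiv ℚ _ g) m = ((1 + X ^ τ) * (g : ℚ[X])).coeff m := by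
  have hg : (g : ℚ[X]) = ∑ n : Fin _, monomial n (degreeLTEquiv ℚ _ g n) :=
    congrArg Subtype.val ((degreeLTEquiv ℚ _).symm_apply_apply g).symm
  rw [hg, Finset.mul_sum, finsetSum_coeff, mulVec, dotProduct]
  refine Finset.sum_congr rfl fun n _ => ?_
  rw [cornerA_apply hτ, ← C_mul_X_pow_eq_monomial, mul_left_comm, coeff_C_mul, mul_comm]

theorem cornerb_eq_coeff {p q : ℕ} (hp : 0 < p) (hpq : p < q) (m : Fin (3*p+3*q+1)) :
    cornerb p q m = ((1 + X ^ (3*p)) * (1 + X ^ (3*q)) : ℚ[X]).coeff m := by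
  simp only [cornerb, add_mul, mul_add, one_mul, mul_one, ← pow_add, coeff_add, coeff_one,
    coeff_X_pow]
  split_ifs <;> first | omega | norm_num

theorem exists_mulVec_cornerA_eq_cornerb_iff {p q τ : ℕ} (hp : 0 < p) (hpq : p < q)
    (hτ0 : 0 < τ) (hτ : τ ≤ 3*p+3*q) :
    (∃ c, cornerA p q τ *ᵥ c = cornerb p q) ↔
      (1 + X ^ τ : ℚ[X]) ∣ (1 + X ^ (3*p)) * (1 + X ^ (3*q)) := by
  set B : ℚ[X] := (1 + X ^ (3*p)) * (1 + X ^ (3*q))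
  have hf : (1 + X ^ τ : ℚ[X]) ≠ 0 := by
    rw [add_comm, ← C_1]
    exact X_pow_add_C_ne_zero hτ0 1
  have hBdeg : B.natDegree ≤ 3*p+3*q :=
    natDegree_mul_le.trans (by rw [natDegree_one_add_X_pow, natDegree_one_add_X_pow])
  have hsolve (g : degreeLT ℚ (3*p+3*q-τ+1)) :
      cornerA p q τ *ᵥ degreeLTEquiv ℚ _ g = cornerb p q ↔
        (1 + X ^ τ) * (g : ℚ[X]) = B := by
    have hg : (g : ℚ[X]).natDegree ≤ 3*p+3*q-τ := by
      rw [natDegree_le_iff_degree_le, ← mem_degreeLE, ← degreeLT_succ_eq_degreeLE]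
      exact g.2
    have hfg : ((1 + X ^ τ) * (g : ℚ[X])).natDegree ≤ 3*p+3*q := by
      have := natDegree_mul_le (p := (1 + X ^ τ : ℚ[X])) (q := g)
      rw [natDegree_one_add_X_pow] at this
      omega
    rw [ext_iff_natDegree_le hfg hBdeg, funext_iff]
    simp only [mulVec_cornerA_degreeLTEquiv hτ0, cornerb_eq_coeff hp hpq]
    exact ⟨fun h i hi => h ⟨i, by omega⟩, fun h m => h m (by omega)⟩
  rw [(degreeLTEquiv ℚ _).surjective.exists,
    ← exists_mem_degreeLT_mul_eq_iff_dvd (k := 3*p+3*q-τ+1) hf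
      (by rw [natDegree_one_add_X_pow]; omega)]
  simp only [hsolve, Subtype.exists, exists_prop]

theorem mem_GammaL_iff_s17 {q l : ℕ} :
    q ∈ GammaL l ↔ ∃ t, Odd t ∧ 3 * q = t * 2 ^ (2 * l - 1) := by
  constructor
  · rintro ⟨k, hk, rfl⟩
    refine ⟨3 * (2 * k - 1), Nat.odd_mul.mpr ⟨⟨1, rfl⟩, ⟨k - 1, by omega⟩⟩, ?_⟩
    rw [mul_assoc]
  · rintro ⟨t, ht, h⟩
    obtain ⟨s, rfl⟩ : 2 ^ (2 * l - 1) ∣ q :=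
      (Nat.Coprime.pow_left _ (by norm_num : Nat.Coprime 2 3)).dvd_of_dvd_mul_left
        ⟨t, by rw [h, mul_comm]⟩
    obtain ⟨r, rfl⟩ : Odd s := by
      have h3 : t = 3 * s :=
        Nat.eq_of_mul_eq_mul_right (m := 2 ^ (2 * l - 1)) (by positivity) (by rw [← h]; ring)
      exact (Nat.odd_mul.mp (h3 ▸ ht)).2
    exact ⟨r + 1, by omega, by rw [show 2 * (r + 1) - 1 = 2 * r + 1 by omega, mul_comm]⟩

theorem rank_eq_iff_q_mem_general (p q l : ℕ) (hp : 0 < p) (hpq : p < q)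
    (hlt : 3*p < 2^(2*l-1)) (hτ : 2^(2*l-1) ≤ 3*p+3*q) :
    (cornerAb p q (2^(2*l-1))).rank = (cornerA p q (2^(2*l-1))).rank ↔
      q ∈ GammaL l := by
  rw [cornerAb_eq_snoc, Matrix.rank_of_snoc_eq_rank_iff,
    exists_mulVec_cornerA_eq_cornerb_iff hp hpq (by positivity) hτ,
    one_add_X_pow_dvd_mul_iff hlt, mem_GammaL_iff_s17]

theorem rank_eq_iff_q_mem (p q l : ℕ) (hp : 0 < p) (hpq : p < q)
    (hco : Nat.Coprime p q) (hl : 0 < l)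
    (hlt : 3*p < 2^(2*l-1)) (hτ : 2^(2*l-1) ≤ 3*p+3*q) :
    (cornerAb p q (2^(2*l-1))).rank = (cornerA p q (2^(2*l-1))).rank ↔
      q ∈ GammaL l :=
  rank_eq_iff_q_mem_general p q l hp hpq hlt hτ
end

section
/- Let t = p/q ∈ (0,1) with p, q coprime positive integers, p < q. If C_t has no exact overlaps, then the Lebesgue measure of C_t is at least 1/q. -/
open Filter Topology MeasureTheory

/-- `C_t` has an exact overlap: two distinct finite digit sequences of the same
length `k ≥ 1` with equal weighted sums. -/
def HasExactOverlap (t : ℝ) : Prop :=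
  ∃ k : ℕ, 0 < k ∧ ∃ c d : Fin k → ℝ,
    (∀ n, c n ∈ Omega t) ∧ (∀ n, d n ∈ Omega t) ∧ c ≠ d ∧
    ∑ n : Fin k, c n / 4^((n : ℕ)+1) = ∑ n : Fin k, d n / 4^((n : ℕ)+1)

/-!
The level-`k` cylinders of `C_t` are the intervals `[S_e, S_e + 2·4⁻ᵏ]`, where `S_e` runs over
the `4ᵏ` partial sums `∑_{n<k} e_n 4^{-(n+1)}` with digits `e_n ∈ Ω_t`; they decrease in `k`,
and by compactness of the digit space their intersection lies in `C_t`. For `t = p/q` every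
`S_e` is a multiple of `δ = 1/(q·4ᵏ)`, and without exact overlaps the `S_e` are pairwise
distinct, so the intervals `[S_e, S_e + δ)` are disjoint and cover measure `4ᵏ·δ = 1/q`.
Continuity of the measure from above passes the bound to `C_t`.
-/

open Set
open scoped ENNReal

namespace Base4

variable {ι : Type*} (a : ι → ℝ)

noncomputable def partialSum {k : ℕ} (e : Fin k → ι) : ℝ :=
  ∑ n : Fin k, a (e n) / 4 ^ ((n : ℕ) + 1)

noncomputable def series (g : ℕ → ι) : ℝ :=
  ∑' n, a (g n) / 4 ^ (n + 1)

def attractor : Set ℝ := range (series a)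

/-- With digits in `[0, M]`, the tails from position `k` on lie in `[0, M / (3 * 4 ^ k)]`. -/
noncomputable def cover (M : ℝ) (k : ℕ) : Set ℝ :=
  ⋃ e : Fin k → ι, Icc (partialSum a e) (partialSum a e + M / (3 * 4 ^ k))

lemma summable_div_four_pow_succ (M : ℝ) : Summable fun n : ℕ => M / 4 ^ (n + 1) := by
  refine ((summable_geometric_of_lt_one (by norm_num) (by norm_num : (1 / 4 : ℝ) < 1)).mul_left
    (M / 4)).congr fun n => ?_
  rw [pow_succ, one_div_pow]
  ring

lemma tsum_div_four_pow_add_succ (M : ℝ) (k : ℕ) :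
    ∑' n : ℕ, M / 4 ^ (n + k + 1) = M / (3 * 4 ^ k) := by
  have h : ∀ n : ℕ, M / 4 ^ (n + k + 1) = M / 4 ^ (k + 1) * (1 / 4) ^ n := fun n => by
    rw [show n + k + 1 = (k + 1) + n by omega, pow_add, one_div_pow]
    ring
  rw [tsum_congr h, tsum_mul_left, tsum_geometric_of_lt_one (by norm_num) (by norm_num), pow_succ]
  field_simp
  norm_num

lemma partialSum_succ {k : ℕ} (e : Fin (k + 1) → ι) :
    partialSum a e = partialSum a (Fin.init e) + a (e (Fin.last k)) / 4 ^ (k + 1) := by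
  simp only [partialSum, Fin.sum_univ_castSucc, Fin.init, Fin.val_castSucc, Fin.val_last]

variable {a}

lemma partialSum_mem_zmultiples {c : ℝ} (ha : ∀ i, a i ∈ AddSubgroup.zmultiples c)
    {k : ℕ} (e : Fin k → ι) : partialSum a e ∈ AddSubgroup.zmultiples (c / 4 ^ k) := by
  refine AddSubgroup.sum_mem _ fun n _ => ?_
  obtain ⟨m, hm⟩ := AddSubgroup.mem_zmultiples_iff.1 (ha (e n))
  have hpow : (4 : ℝ) ^ k = 4 ^ (k - 1 - n) * 4 ^ ((n : ℕ) + 1) := by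
    rw [← pow_add]
    congr 1
    omega
  refine AddSubgroup.mem_zmultiples_iff.2 ⟨m * 4 ^ (k - 1 - n), ?_⟩
  rw [← hm, zsmul_eq_mul, zsmul_eq_mul, hpow]
  push_cast
  field_simp

variable {M : ℝ} (h0 : ∀ i, 0 ≤ a i) (hM : ∀ i, a i ≤ M)
include h0 hM

lemma summable_series_terms (g : ℕ → ι) : Summable fun n => a (g n) / 4 ^ (n + 1) :=
  (summable_div_four_pow_succ M).of_nonneg_of_le (fun _ => div_nonneg (h0 _) (by positivity))
    fun _ => by gcongr; exact hM _

lemma series_mem_Icc_partialSum (g : ℕ → ι) (k : ℕ) :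
    series a g ∈ Icc (partialSum a fun n : Fin k => g n)
      ((partialSum a fun n : Fin k => g n) + M / (3 * 4 ^ k)) := by
  set f : ℕ → ℝ := fun n => a (g n) / 4 ^ (n + 1) with hf
  have hsum : Summable f := summable_series_terms h0 hM g
  have hsplit : ∑ n ∈ Finset.range k, f n + ∑' n, f (n + k) = series a g :=
    hsum.sum_add_tsum_nat_add k
  have hpartial : (partialSum a fun n : Fin k => g n) = ∑ n ∈ Finset.range k, f n :=
    Fin.sum_univ_eq_sum_range f k
  have htail_nonneg : 0 ≤ ∑' n, f (n + k) :=
    tsum_nonneg fun _ => div_nonneg (h0 _) (by positivity)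
  have htail_le : ∑' n, f (n + k) ≤ M / (3 * 4 ^ k) := by
    rw [← tsum_div_four_pow_add_succ M k]
    refine Summable.tsum_le_tsum (fun n => ?_) ((summable_nat_add_iff k).2 hsum)
      ((summable_nat_add_iff k (f := fun n : ℕ => M / 4 ^ (n + 1))).2
        (summable_div_four_pow_succ M))
    simp only [hf, add_assoc]
    gcongr
    exact hM _
  rw [← hsplit, hpartial]
  exact ⟨by linarith, by linarith⟩

lemma cover_antitone : Antitone (cover a M) := by
  refine antitone_nat_of_succ_le fun k x hx => ?_
  simp only [cover, mem_iUnion, mem_Icc] at hx ⊢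
  obtain ⟨e, hx₁, hx₂⟩ := hx
  rw [partialSum_succ] at hx₁ hx₂
  have hlast := h0 (e (Fin.last k))
  have hlen : a (e (Fin.last k)) / 4 ^ (k + 1) + M / (3 * 4 ^ (k + 1)) ≤ M / (3 * 4 ^ k) := by
    rw [pow_succ]
    field_simp
    linarith [hM (e (Fin.last k))]
  exact ⟨Fin.init e, by linarith [div_nonneg hlast (by positivity : (0 : ℝ) ≤ 4 ^ (k + 1))],
    by linarith⟩

lemma continuous_series [TopologicalSpace ι] [DiscreteTopology ι] : Continuous (series a) := by
  refine continuous_tsum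
    (fun n => (continuous_of_discreteTopology (f := fun i => a i / 4 ^ (n + 1))).comp
      (continuous_apply n))
    (summable_div_four_pow_succ M) fun n g => ?_
  rw [Real.norm_of_nonneg (div_nonneg (h0 _) (by positivity))]
  gcongr
  exact hM _

/-- A point of `cover a M k` is within `M / (3 * 4 ^ k)` of the attractor, which is compact. -/
lemma iInter_cover_subset_attractor [TopologicalSpace ι] [DiscreteTopology ι] [Finite ι]
    [Nonempty ι] : ⋂ k, cover a M k ⊆ attractor a := by
  intro x hx
  have hclosed : IsClosed (attractor a) := (isCompact_range (continuous_series h0 hM)).isClosed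
  rw [← hclosed.closure_eq, Metric.mem_closure_iff]
  intro ε hε
  have hlen : Tendsto (fun k : ℕ => M / (3 * 4 ^ k)) atTop (𝓝 0) :=
    tendsto_const_nhds.div_atTop
      ((tendsto_pow_atTop_atTop_of_one_lt (by norm_num : (1 : ℝ) < 4)).const_mul_atTop
        (by norm_num))
  obtain ⟨k, hk⟩ := (hlen.eventually (gt_mem_nhds hε)).exists
  obtain ⟨e, hxe⟩ := mem_iUnion.1 (mem_iInter.1 hx k)
  let g : ℕ → ι := fun n => if h : n < k then e ⟨n, h⟩ else Classical.arbitrary ι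
  have hge : (fun n : Fin k => g n) = e := funext fun n => by simp [g, n.isLt]
  have hg := series_mem_Icc_partialSum h0 hM g k
  rw [hge] at hg
  refine ⟨series a g, mem_range_self g, ?_⟩
  rw [Real.dist_eq, abs_sub_lt_iff]
  exact ⟨by linarith [hxe.2, hg.1], by linarith [hxe.1, hg.2]⟩

lemma le_volume_attractor [TopologicalSpace ι] [DiscreteTopology ι] [Finite ι] [Nonempty ι]
    {c : ℝ≥0∞} (hc : ∀ k, c ≤ volume (cover a M k)) : c ≤ volume (attractor a) := by
  have hmeas : ∀ k, NullMeasurableSet (cover a M k) volume := fun k =>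
    (MeasurableSet.iUnion fun _ => measurableSet_Icc).nullMeasurableSet
  have hfin : volume (cover a M 0) ≠ ∞ :=
    (Bornology.isBounded_iUnion.2 fun _ => Metric.isBounded_Icc _ _).measure_lt_top.ne
  calc c ≤ volume (⋂ k, cover a M k) := by
        rw [(cover_antitone h0 hM).measure_iInter hmeas ⟨0, hfin⟩]
        exact le_iInf hc
    _ ≤ volume (attractor a) := measure_mono (iInter_cover_subset_attractor h0 hM)

end Base4

lemma card_mul_ofReal_le_volume_iUnion_Icc {κ : Type*} [Fintype κ] {x : κ → ℝ}
    (hx : Function.Injective x) {δ L : ℝ} (hδL : δ ≤ L)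
    (hmem : ∀ i, x i ∈ AddSubgroup.zmultiples δ) :
    Fintype.card κ * ENNReal.ofReal δ ≤ volume (⋃ i, Icc (x i) (x i + L)) := by
  choose n hn using fun i => AddSubgroup.mem_zmultiples_iff.1 (hmem i)
  have hdisj : Pairwise (Function.onFun Disjoint fun i => Ico (x i) (x i + δ)) := by
    intro i j hij
    have h := pairwise_disjoint_Ico_add_zsmul (0 : ℝ) δ
      (fun hn' => hij (hx (by rw [← hn i, ← hn j, hn'])) : n i ≠ n j)
    simpa only [Function.onFun, zero_add, add_zsmul, one_zsmul, hn] using h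
  calc (Fintype.card κ : ℝ≥0∞) * ENNReal.ofReal δ = ∑ i, volume (Ico (x i) (x i + δ)) := by
        simp [Real.volume_Ico]
    _ = volume (⋃ i, Ico (x i) (x i + δ)) :=
        (measure_iUnion hdisj fun _ => measurableSet_Ico).trans (tsum_fintype _) |>.symm
    _ ≤ volume (⋃ i, Icc (x i) (x i + L)) :=
        measure_mono (iUnion_mono fun _ => Ico_subset_Icc_self.trans
          (Icc_subset_Icc_right (by linarith)))

noncomputable def cornerDigit (t : ℝ) : Fin 4 → ℝ := ![0, 3 * t, 3, 3 * t + 3]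

lemma cornerDigit_mem_Omega (t : ℝ) (i : Fin 4) : cornerDigit t i ∈ Omega t := by
  fin_cases i <;> simp [cornerDigit, Omega]

lemma cornerDigit_injective {t : ℝ} (h0 : 0 < t) (h1 : t < 1) :
    Function.Injective (cornerDigit t) := by
  intro i j hij
  fin_cases i <;> fin_cases j <;> simp_all [cornerDigit] <;> linarith

lemma cornerDigit_nonneg {t : ℝ} (h0 : 0 ≤ t) (i : Fin 4) : 0 ≤ cornerDigit t i := by
  fin_cases i <;> simp [cornerDigit] <;> linarith

lemma cornerDigit_le_six {t : ℝ} (h1 : t ≤ 1) (i : Fin 4) : cornerDigit t i ≤ 6 := by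
  fin_cases i <;> simp [cornerDigit] <;> linarith

lemma cornerDigit_mem_zmultiples (p : ℕ) {q : ℕ} (hq : q ≠ 0) (i : Fin 4) :
    cornerDigit (p / q) i ∈ AddSubgroup.zmultiples (1 / q : ℝ) := by
  have hcoef : ∀ m : ℕ, (m : ℝ) / q ∈ AddSubgroup.zmultiples (1 / q : ℝ) := fun m =>
    AddSubgroup.mem_zmultiples_iff.2 ⟨m, by simp [div_eq_mul_one_div (m : ℝ)]⟩
  have hq' : (q : ℝ) ≠ 0 := Nat.cast_ne_zero.2 hq
  fin_cases i
  · simp [cornerDigit]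
  · simpa [cornerDigit, mul_div_assoc] using hcoef (3 * p)
  · simpa [cornerDigit, hq'] using hcoef (3 * q)
  · simpa [cornerDigit, hq', add_div, mul_div_assoc] using hcoef (3 * p + 3 * q)

lemma attractor_cornerDigit_subset_cornerC (t : ℝ) :
    Base4.attractor (cornerDigit t) ⊆ cornerC t :=
  range_subset_iff.2 fun g =>
    ⟨fun n => cornerDigit t (g n), fun _ => cornerDigit_mem_Omega t _, rfl⟩

lemma partialSum_injective_of_not_hasExactOverlap {ι : Type*} {a : ι → ℝ} {t : ℝ}
    (hno : ¬ HasExactOverlap t) (ha : Function.Injective a) (hΩ : ∀ i, a i ∈ Omega t) (k : ℕ) :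
    Function.Injective (Base4.partialSum a : (Fin k → ι) → ℝ) := by
  intro e₁ e₂ heq
  by_contra hne
  rcases Nat.eq_zero_or_pos k with rfl | hk
  · exact hne (Subsingleton.elim _ _)
  exact hno ⟨k, hk, a ∘ e₁, a ∘ e₂, fun _ => hΩ _, fun _ => hΩ _,
    fun h => hne (funext fun n => ha (congrFun h n)), heq⟩

lemma one_div_le_volume_cover {p q : ℕ} (hp : 0 < p) (hpq : p < q)
    (hno : ¬ HasExactOverlap ((p : ℝ) / q)) (k : ℕ) :
    1 / (q : ℝ≥0∞) ≤ volume (Base4.cover (cornerDigit (p / q)) 6 k) := by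
  have hq1 : (1 : ℝ) ≤ q := by exact_mod_cast hp.trans hpq
  have hq : (0 : ℝ) < q := by linarith
  have ht : 0 < (p : ℝ) / q ∧ (p : ℝ) / q < 1 :=
    ⟨by positivity, (div_lt_one hq).2 (by exact_mod_cast hpq)⟩
  have hδL : 1 / q / 4 ^ k ≤ (6 : ℝ) / (3 * 4 ^ k) := by
    rw [div_div, div_le_div_iff₀ (by positivity) (by positivity)]
    nlinarith [pow_pos (by norm_num : (0 : ℝ) < 4) k]
  have hbound := card_mul_ofReal_le_volume_iUnion_Icc
    (partialSum_injective_of_not_hasExactOverlap hno (cornerDigit_injective ht.1 ht.2)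
      (cornerDigit_mem_Omega _) k) hδL
    (Base4.partialSum_mem_zmultiples (cornerDigit_mem_zmultiples p (hp.trans hpq).ne'))
  have hcard : (Fintype.card (Fin k → Fin 4) : ℝ≥0∞) * ENNReal.ofReal (1 / q / 4 ^ k) = 1 / q := by
    simp only [Fintype.card_fun, Fintype.card_fin]
    rw [← ENNReal.ofReal_natCast, ← ENNReal.ofReal_mul (by positivity)]
    push_cast
    rw [mul_div_cancel₀ _ (by positivity), ENNReal.ofReal_div_of_pos hq]
    simp
  rwa [hcard] at hbound

theorem measure_ge_of_no_overlap_general (p q : ℕ) (hp : 0 < p) (hpq : p < q)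
    (hno : ¬ HasExactOverlap ((p : ℝ) / q)) :
    1 / (q : ENNReal) ≤ volume (cornerC ((p : ℝ) / q)) := by
  have ht : 0 ≤ (p : ℝ) / q ∧ (p : ℝ) / q ≤ 1 :=
    ⟨by positivity, div_le_one_of_le₀ (by exact_mod_cast hpq.le) (Nat.cast_nonneg q)⟩
  calc 1 / (q : ENNReal) ≤ volume (Base4.attractor (cornerDigit (p / q))) :=
        Base4.le_volume_attractor (cornerDigit_nonneg ht.1) (cornerDigit_le_six ht.2)
          (one_div_le_volume_cover hp hpq hno)
    _ ≤ volume (cornerC (p / q)) := measure_mono (attractor_cornerDigit_subset_cornerC _)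

theorem measure_ge_of_no_overlap (p q : ℕ) (hp : 0 < p) (hpq : p < q)
    (hco : Nat.Coprime p q) (hno : ¬ HasExactOverlap ((p : ℝ) / q)) :
    1 / (q : ENNReal) ≤ volume (cornerC ((p : ℝ) / q)) :=
  measure_ge_of_no_overlap_general p q hp hpq hno
end
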